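/- Greedy improvement bound for submodular-smooth sequences: Let F be a real-valued function, and suppose there are two sequences starting at the same point: an optimal path X_0, X_1, ..., X_{k1} = X* satisfying the submodularity condition F(X_{i+1}) - F(X_i) ≤ F(X_i) - F(X_{i-1}) for all valid i; and a greedy path Z_0 = X_0, Z_1, ..., Z_{k2} = Z* satisfying the smoothness condition F(Z_{i+1}) - F(Z_i) ≥ γ (F(Z_i) - F(Z_{i-1})) for all i with i+1 ≤ N_min, where 0 < γ < 1, and the greedy first step dominates: F(Z_1) ≥ F(X_1). Assume N_min ≤ k1, k2 ≤ N_max and F(Z*) ≥ F(Z_{N_min}). Then F(Z*) - F(X_0) ≥ ((1 - γ^{N_min}) / ((1-γ) N_max)) · (F(X*) - F(X_0)). -/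
import Mathlib


theorem greedy_improvement_bound {α : Type*} (F : α → ℝ)
    (k1 k2 Nmin Nmax : ℕ) (γ : ℝ) (X Z : ℕ → α)
    (hγ0 : 0 < γ) (hγ1 : γ < 1)
    (hNmin1 : 1 ≤ Nmin) (hNmink1 : Nmin ≤ k1) (hNmink2 : Nmin ≤ k2)
    (hk1 : k1 ≤ Nmax) (hk2 : k2 ≤ Nmax)
    (hZ0 : Z 0 = X 0)
    (hXmono : ∀ i, i < k1 → F (X i) ≤ F (X (i + 1)))
    (hsubmod : ∀ i, 1 ≤ i → i + 1 ≤ k1 →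
      F (X (i + 1)) - F (X i) ≤ F (X i) - F (X (i - 1)))
    (hsmooth : ∀ i, 1 ≤ i → i + 1 ≤ Nmin →
      F (Z (i + 1)) - F (Z i) ≥ γ * (F (Z i) - F (Z (i - 1))))
    (hfirst : F (Z 1) ≥ F (X 1))
    (hZstar : F (Z k2) ≥ F (Z Nmin)) :
    F (Z k2) - F (X 0) ≥
      (1 - γ ^ Nmin) / ((1 - γ) * Nmax) * (F (X k1) - F (X 0)) := by
  set d := F (X 1) - F (X 0) with hd_def
  set e := F (Z 1) - F (Z 0) with he_def
  have hk1pos : 1 ≤ k1 := le_trans hNmin1 hNmink1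
  have hd0 : 0 ≤ d := sub_nonneg.2 (hXmono 0 hk1pos)
  have hde : d ≤ e := by rw [hd_def, he_def, hZ0]; linarith
  have he0 : 0 ≤ e := le_trans hd0 hde
  -- X increments bounded by d
  have hstep : ∀ i, i < k1 → F (X (i + 1)) - F (X i) ≤ d := by
    intro i
    induction i with
    | zero => intro _; simp [hd_def]
    | succ n ih =>
      intro h
      have h1 := hsubmod (n + 1) (by omega) (by omega)
      simp only [Nat.add_sub_cancel] at h1
      have h2 := ih (by omega)
      linarith
  -- telescoping for X
  have htel : ∀ n, n ≤ k1 → F (X n) - F (X 0) ≤ (n : ℝ) * d := by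
    intro n
    induction n with
    | zero => intro _; simp
    | succ n ih =>
      intro h
      have h1 := hstep n (by omega)
      have h2 := ih (by omega)
      push_cast
      linarith
  -- Z increments geometric
  have hZstep : ∀ i, i < Nmin → γ ^ i * e ≤ F (Z (i + 1)) - F (Z i) := by
    intro i
    induction i with
    | zero => intro _; simp [he_def]
    | succ n ih =>
      intro h
      have h1 := hsmooth (n + 1) (by omega) (by omega)
      simp only [Nat.add_sub_cancel] at h1
      have h2 := ih (by omega)
      have h3 : γ * (γ ^ n * e) ≤ γ * (F (Z (n + 1)) - F (Z n)) :=
        mul_le_mul_of_nonneg_left h2 hγ0.le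
      calc γ ^ (n + 1) * e = γ * (γ ^ n * e) := by ring
        _ ≤ γ * (F (Z (n + 1)) - F (Z n)) := h3
        _ ≤ F (Z (n + 1 + 1)) - F (Z (n + 1)) := h1
  -- telescoping for Z
  have hZtel : ∀ n, n ≤ Nmin →
      (∑ i ∈ Finset.range n, γ ^ i) * e ≤ F (Z n) - F (Z 0) := by
    intro n
    induction n with
    | zero => intro _; simp
    | succ n ih =>
      intro h
      have h1 := hZstep n (by omega)
      have h2 := ih (by omega)
      rw [Finset.sum_range_succ, add_mul]
      linarith
  have hγne : γ ≠ 1 := ne_of_lt hγ1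
  have h1γ : (0:ℝ) < 1 - γ := by linarith
  have hsum : (∑ i ∈ Finset.range Nmin, γ ^ i) = (1 - γ ^ Nmin) / (1 - γ) := by
    rw [geom_sum_eq hγne]
    rw [div_eq_div_iff (by linarith) (by linarith)]
    ring
  have hpow1 : γ ^ Nmin ≤ 1 := pow_le_one₀ hγ0.le hγ1.le
  have hS0 : 0 ≤ (1 - γ ^ Nmin) / (1 - γ) := div_nonneg (by linarith) h1γ.le
  have hNmaxpos : (0:ℝ) < (Nmax : ℝ) := by
    exact_mod_cast Nat.lt_of_lt_of_le (by omega) (le_trans hNmink1 hk1)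
  -- F(X k1) - F(X 0) ≤ Nmax * d
  have hX : F (X k1) - F (X 0) ≤ (Nmax : ℝ) * d := by
    have h1 := htel k1 le_rfl
    have h2 : (k1 : ℝ) * d ≤ (Nmax : ℝ) * d :=
      mul_le_mul_of_nonneg_right (by exact_mod_cast hk1) hd0
    linarith
  have hT0 : 0 ≤ (1 - γ ^ Nmin) / ((1 - γ) * Nmax) :=
    div_nonneg (by linarith) (mul_pos h1γ hNmaxpos).le
  have key : (1 - γ ^ Nmin) / ((1 - γ) * Nmax) * (F (X k1) - F (X 0)) ≤
      (1 - γ ^ Nmin) / (1 - γ) * d := by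
    calc (1 - γ ^ Nmin) / ((1 - γ) * Nmax) * (F (X k1) - F (X 0))
        ≤ (1 - γ ^ Nmin) / ((1 - γ) * Nmax) * ((Nmax : ℝ) * d) :=
          mul_le_mul_of_nonneg_left hX hT0
      _ = (1 - γ ^ Nmin) / (1 - γ) * d := by
          field_simp
  have hZN := hZtel Nmin le_rfl
  rw [hsum] at hZN
  have hSd : (1 - γ ^ Nmin) / (1 - γ) * d ≤ (1 - γ ^ Nmin) / (1 - γ) * e :=
    mul_le_mul_of_nonneg_left hde hS0
  have hfinal : F (Z Nmin) - F (Z 0) ≤ F (Z k2) - F (X 0) := by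
    rw [hZ0]; linarith
  linarith
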